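/- Let $\varphi(t)$ and $\psi(t)$ be nonnegative functions on $[0,T]$ with $\varphi$ absolutely continuous, satisfying $\varphi'(t)+\psi(t)\leq C_*\varphi(t)^3 + h(t)\varphi(t) + f(t)$ for $t\in(0,T]$ and $\varphi(0)=\varphi_0\geq 0$, where $h$ and $f$ are nonnegative continuous functions and $C_*\geq 0$. Let $T_1\in(0,T]$ satisfy $C_*\int_0^{T_1}\big(2\varphi_0+2\int_0^s f(\tau)\,d\tau\big)^2\,ds+\int_0^{T_1}h(s)\,ds\leq \tfrac12\ln(3/2)$. Then for all $t\in[0,T_1]$, $\varphi(t)+\int_0^t\psi(s)\,ds\leq 2\big(\varphi_0+\int_0^t f(s)\,ds\big)$. -/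

import Mathlib

open intervalIntegral Set

open MeasureTheory Filter Topology

/-!
Set `F t = φ₀ + ∫₀ᵗ f`, which is nondecreasing. Integrating the differential inequality gives
`φ t + ∫₀ᵗ ψ ≤ F t + ∫₀ᵗ (C φ³ + h φ)`. While `φ < 2F + ε` on `[0, t)`, monotonicity of `F`
bounds the last integral by `(2 F t + ε) (C ∫₀ᵗ (2F + ε)² + ∫₀ᵗ h)`, and the smallness condition
(`½ log (3/2) < ½`, which survives a small perturbation `ε`) makes this at most `F t + ε / 2`.
Hence `φ t + ∫₀ᵗ ψ ≤ 2 F t + ε / 2 < 2 F t + ε`, so by continuity `φ` never reaches the barrier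
`2F + ε`; letting `ε → 0` gives the claim. The perturbation is needed because `F` may vanish.
-/

theorem ContinuousOn.forall_Icc_lt_of_forall_Ico_lt {α β : Type*}
    [ConditionallyCompleteLinearOrder α] [TopologicalSpace α] [OrderTopology α]
    [LinearOrder β] [TopologicalSpace β] [OrderClosedTopology β] {f g : α → β} {a b : α}
    (hf : ContinuousOn f (Icc a b)) (hg : ContinuousOn g (Icc a b))
    (step : ∀ t ∈ Icc a b, (∀ s ∈ Ico a t, f s < g s) → f t < g t) :
    ∀ t ∈ Icc a b, f t < g t := by
  by_contra! hbad
  set S := {t ∈ Icc a b | g t ≤ f t}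
  have hS : sInf S ∈ S :=
    isClosed_Icc.isClosed_le hg hf |>.csInf_mem hbad ⟨a, fun t ht => ht.1.1⟩
  refine (step _ hS.1 fun s hs => ?_).not_ge hS.2
  by_contra! hgs
  exact hs.2.not_ge (csInf_le ⟨a, fun t ht => ht.1.1⟩ ⟨⟨hs.1, hs.2.le.trans hS.1.2⟩, hgs⟩)

theorem mul_pow_three_add_mul_le {C k x y z : ℝ} (hC : 0 ≤ C) (hk : 0 ≤ k) (hx : 0 ≤ x)
    (hxy : x ≤ y) (hyz : y ≤ z) : C * x ^ 3 + k * x ≤ (C * y ^ 2 + k) * z :=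
  calc C * x ^ 3 + k * x = C * x ^ 2 * x + k * x := by ring
    _ ≤ C * y ^ 2 * z + k * z := by have := hxy.trans hyz; gcongr
    _ = (C * y ^ 2 + k) * z := by ring

theorem continuous_integral_add_sq {u : ℝ → ℝ} {a b : ℝ} (hu : IntervalIntegrable u volume a b)
    (hu2 : IntervalIntegrable (fun s => u s ^ 2) volume a b) :
    Continuous fun ε : ℝ => ∫ s in a..b, (u s + ε) ^ 2 := by
  have hexpand : ∀ ε : ℝ, ∫ s in a..b, (u s + ε) ^ 2
      = (∫ s in a..b, u s ^ 2) + 2 * ε * (∫ s in a..b, u s) + (b - a) * ε ^ 2 := fun ε => by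
    have hlin : IntervalIntegrable (fun s => 2 * ε * u s + ε ^ 2) volume a b :=
      (hu.const_mul _).add intervalIntegrable_const
    rw [integral_congr (g := fun s => u s ^ 2 + (2 * ε * u s + ε ^ 2)) fun s _ => by ring,
      integral_add hu2 hlin, integral_add (hu.const_mul _) intervalIntegrable_const,
      intervalIntegral.integral_const_mul, intervalIntegral.integral_const, smul_eq_mul]
    ring
  simp_rw [hexpand]
  fun_prop

theorem monotoneOn_primitive_of_nonneg {u : ℝ → ℝ} {a b : ℝ} (hu : ContinuousOn u (Icc a b))
    (hnn : ∀ s ∈ Icc a b, 0 ≤ u s) : MonotoneOn (fun t => ∫ s in a..t, u s) (Icc a b) :=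
  fun _ hs _ ht hst => integral_mono_interval le_rfl hs.1 hst
    ((ae_restrict_mem measurableSet_Ioc).mono fun r hr => hnn r ⟨hr.1.le, hr.2.trans ht.2⟩)
    ((hu.mono (Icc_subset_Icc_right ht.2)).intervalIntegrable_of_Icc ht.1)

theorem sub_add_integral_le_of_hasDerivAt {φ φ' ψ G : ℝ → ℝ} {a b : ℝ} (hab : a ≤ b)
    (hφ : ContinuousOn φ (Icc a b)) (hderiv : ∀ t ∈ Ioo a b, HasDerivAt φ (φ' t) t)
    (hψ : IntervalIntegrable ψ volume a b) (hG : IntervalIntegrable G volume a b)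
    (hle : ∀ t ∈ Ioo a b, φ' t + ψ t ≤ G t) :
    φ b - φ a + ∫ t in a..b, ψ t ≤ ∫ t in a..b, G t := by
  have := sub_le_integral_of_hasDeriv_right_of_le hab hφ
    (fun t ht => (hderiv t ht).hasDerivWithinAt)
    ((intervalIntegrable_iff_integrableOn_Icc_of_le hab).1 (hG.sub hψ))
    fun t ht => le_sub_iff_add_le.2 (hle t ht)
  rw [integral_sub hG hψ] at this
  linarith

theorem integral_cubic_add_linear_le {C : ℝ} {φ k B : ℝ → ℝ} {a b : ℝ} (hab : a ≤ b)
    (hC : 0 ≤ C) (hφ : ContinuousOn φ (Icc a b)) (hk : ContinuousOn k (Icc a b))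
    (hB : ContinuousOn B (Icc a b)) (hφnn : ∀ s ∈ Ioo a b, 0 ≤ φ s)
    (hknn : ∀ s ∈ Ioo a b, 0 ≤ k s) (hφB : ∀ s ∈ Ioo a b, φ s ≤ B s)
    (hBb : ∀ s ∈ Ioo a b, B s ≤ B b) :
    ∫ s in a..b, (C * φ s ^ 3 + k s * φ s) ≤
      B b * (C * (∫ s in a..b, B s ^ 2) + ∫ s in a..b, k s) := by
  have hB2 : IntervalIntegrable (fun s => C * B s ^ 2) volume a b :=
    ((hB.pow 2).const_smul C).intervalIntegrable_of_Icc hab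
  calc ∫ s in a..b, (C * φ s ^ 3 + k s * φ s)
      ≤ ∫ s in a..b, (C * B s ^ 2 + k s) * B b :=
        integral_mono_on_of_le_Ioo hab
          (((hφ.pow 3).const_smul C).add (hk.mul hφ) |>.intervalIntegrable_of_Icc hab)
          ((hB2.add (hk.intervalIntegrable_of_Icc hab)).mul_const _) fun s hs =>
          mul_pow_three_add_mul_le hC (hknn s hs) (hφnn s hs) (hφB s hs) (hBb s hs)
    _ = B b * (C * (∫ s in a..b, B s ^ 2) + ∫ s in a..b, k s) := by
      rw [intervalIntegral.integral_mul_const, integral_add hB2 (hk.intervalIntegrable_of_Icc hab),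
        intervalIntegral.integral_const_mul, mul_comm]

theorem le_two_mul_add_of_energy_le {C ε a b : ℝ} {φ Ψ k F : ℝ → ℝ} (hC : 0 ≤ C) (hε : 0 < ε)
    (hφ : ContinuousOn φ (Icc a b)) (hφnn : ∀ t ∈ Icc a b, 0 ≤ φ t)
    (hΨnn : ∀ t ∈ Icc a b, 0 ≤ Ψ t) (hk : ContinuousOn k (Icc a b))
    (hknn : ∀ t ∈ Icc a b, 0 ≤ k t) (hF : ContinuousOn F (Icc a b))
    (hFmono : MonotoneOn F (Icc a b)) (hFa : 0 ≤ F a)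
    (hsmall : C * (∫ s in a..b, (2 * F s + ε) ^ 2) + ∫ s in a..b, k s ≤ 1 / 2)
    (henergy : ∀ t ∈ Icc a b, φ t + Ψ t ≤ F t + ∫ s in a..t, (C * φ s ^ 3 + k s * φ s)) :
    ∀ t ∈ Icc a b, φ t + Ψ t ≤ 2 * F t + ε / 2 := by
  have hB : ContinuousOn (fun s => 2 * F s + ε) (Icc a b) :=
    (continuousOn_const.mul hF).add continuousOn_const
  have key : ∀ t ∈ Icc a b, (∀ s ∈ Ico a t, φ s < 2 * F s + ε) →
      φ t + Ψ t ≤ 2 * F t + ε / 2 := by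
    intro t ht hlt
    have hsub : Icc a t ⊆ Icc a b := Icc_subset_Icc_right ht.2
    have hIoo : ∀ s ∈ Ioo a t, s ∈ Icc a b := fun s hs => hsub (Ioo_subset_Icc_self hs)
    have hBt : 0 ≤ 2 * F t + ε := by
      linarith [hFmono (left_mem_Icc.2 (ht.1.trans ht.2)) ht ht.1]
    have hcoef : C * (∫ s in a..t, (2 * F s + ε) ^ 2) + ∫ s in a..t, k s ≤ 1 / 2 := by
      have hb : b ∈ Icc a b := right_mem_Icc.2 (ht.1.trans ht.2)
      have hB2 := monotoneOn_primitive_of_nonneg (u := fun s => (2 * F s + ε) ^ 2) (hB.pow 2)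
        (fun s _ => sq_nonneg _) ht hb ht.2
      linarith [monotoneOn_primitive_of_nonneg hk hknn ht hb ht.2,
        mul_le_mul_of_nonneg_left hB2 hC]
    have hcubic := integral_cubic_add_linear_le ht.1 hC (hφ.mono hsub) (hk.mono hsub)
      (hB.mono hsub) (fun s hs => hφnn s (hIoo s hs)) (fun s hs => hknn s (hIoo s hs))
      (fun s hs => (hlt s (Ioo_subset_Ico_self hs)).le)
      (fun s hs => by linarith [hFmono (hIoo s hs) ht hs.2.le])
    calc φ t + Ψ t ≤ F t + ∫ s in a..t, (C * φ s ^ 3 + k s * φ s) := henergy t ht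
      _ ≤ F t + (2 * F t + ε) * (1 / 2) := by
        gcongr
        exact hcubic.trans (mul_le_mul_of_nonneg_left hcoef hBt)
      _ = 2 * F t + ε / 2 := by ring
  have hlt : ∀ t ∈ Icc a b, φ t < 2 * F t + ε :=
    hφ.forall_Icc_lt_of_forall_Ico_lt hB fun t ht h => by linarith [key t ht h, hΨnn t ht]
  exact fun t ht => key t ht fun s hs => hlt s ⟨hs.1, hs.2.le.trans ht.2⟩

theorem le_two_mul_of_energy_le {C a b : ℝ} {φ Ψ k F : ℝ → ℝ} (hC : 0 ≤ C)
    (hφ : ContinuousOn φ (Icc a b)) (hφnn : ∀ t ∈ Icc a b, 0 ≤ φ t)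
    (hΨnn : ∀ t ∈ Icc a b, 0 ≤ Ψ t) (hk : ContinuousOn k (Icc a b))
    (hknn : ∀ t ∈ Icc a b, 0 ≤ k t) (hF : ContinuousOn F (Icc a b))
    (hFmono : MonotoneOn F (Icc a b)) (hFa : 0 ≤ F a)
    (hsmall : C * (∫ s in a..b, (2 * F s) ^ 2) + ∫ s in a..b, k s < 1 / 2)
    (henergy : ∀ t ∈ Icc a b, φ t + Ψ t ≤ F t + ∫ s in a..t, (C * φ s ^ 3 + k s * φ s)) :
    ∀ t ∈ Icc a b, φ t + Ψ t ≤ 2 * F t := by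
  intro t ht
  have hab : a ≤ b := ht.1.trans ht.2
  have h2F : ContinuousOn (fun s => 2 * F s) (Icc a b) := continuousOn_const.mul hF
  have hcont : Continuous fun ε : ℝ => C * (∫ s in a..b, (2 * F s + ε) ^ 2) + ∫ s in a..b, k s :=
    (continuous_const.mul (continuous_integral_add_sq (h2F.intervalIntegrable_of_Icc hab)
      ((h2F.pow 2).intervalIntegrable_of_Icc hab))).add continuous_const
  have hsmall_near : ∀ᶠ ε in 𝓝 0,
      C * (∫ s in a..b, (2 * F s + ε) ^ 2) + ∫ s in a..b, k s < 1 / 2 :=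
    (hcont.tendsto 0).eventually_lt_const (by simp only [add_zero]; exact hsmall)
  refine le_of_forall_pos_le_add fun δ hδ => ?_
  obtain ⟨ε, hε_small, hε_pos, hεδ⟩ :=
    ((hsmall_near.filter_mono nhdsWithin_le_nhds).and (Ioo_mem_nhdsGT hδ)).exists
  linarith [le_two_mul_add_of_energy_le hC hε_pos hφ hφnn hΨnn hk hknn hF hFmono hFa
    hε_small.le henergy t ht]

theorem stmt_0_general (T T₁ Cstar φ₀ : ℝ) (φ ψ h f φ' : ℝ → ℝ)
    (hT₁le : T₁ ≤ T)
    (hCstar : 0 ≤ Cstar) (hφ₀ : φ 0 = φ₀) (hφ₀nn : 0 ≤ φ₀)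
    (hφnn : ∀ t ∈ Icc (0:ℝ) T, 0 ≤ φ t)
    (hψnn : ∀ t ∈ Icc (0:ℝ) T, 0 ≤ ψ t)
    (hh : ContinuousOn h (Icc 0 T)) (hhnn : ∀ t ∈ Icc (0:ℝ) T, 0 ≤ h t)
    (hf : ContinuousOn f (Icc 0 T)) (hfnn : ∀ t ∈ Icc (0:ℝ) T, 0 ≤ f t)
    (hψint : ∀ t ∈ Icc (0:ℝ) T, IntervalIntegrable ψ MeasureTheory.volume 0 t)
    (hderiv : ∀ t ∈ Icc (0:ℝ) T, HasDerivAt φ (φ' t) t)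
    (hineq : ∀ t ∈ Ioc (0:ℝ) T, φ' t + ψ t ≤ Cstar * (φ t)^3 + h t * φ t + f t)
    (hsmall : Cstar * (∫ s in (0:ℝ)..T₁, (2*φ₀ + 2 * ∫ τ in (0:ℝ)..s, f τ)^2)
        + (∫ s in (0:ℝ)..T₁, h s) ≤ (1/2) * Real.log (3/2)) :
    ∀ t ∈ Icc (0:ℝ) T₁, φ t + (∫ s in (0:ℝ)..t, ψ s) ≤ 2 * (φ₀ + ∫ s in (0:ℝ)..t, f s) := by
  intro t₀ ht₀
  have hT₁ : 0 ≤ T₁ := ht₀.1.trans ht₀.2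
  have hsub : Icc (0:ℝ) T₁ ⊆ Icc 0 T := Icc_subset_Icc_right hT₁le
  have hφ : ContinuousOn φ (Icc 0 T₁) := fun s hs =>
    (hderiv s (hsub hs)).continuousAt.continuousWithinAt
  have hintegrable : ∀ {u : ℝ → ℝ}, ContinuousOn u (Icc 0 T₁) → ∀ t ∈ Icc (0:ℝ) T₁,
      IntervalIntegrable u volume 0 t := fun hu t ht =>
    (hu.mono (Icc_subset_Icc_right ht.2)).intervalIntegrable_of_Icc ht.1
  set F := fun t => φ₀ + ∫ s in (0:ℝ)..t, f s
  have hFc : ContinuousOn F (Icc 0 T₁) := continuousOn_const.add <|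
    (continuousOn_primitive_interval' (hintegrable (hf.mono hsub) T₁ ⟨hT₁, le_rfl⟩)
      left_mem_uIcc).mono Icc_subset_uIcc
  have hFmono : MonotoneOn F (Icc 0 T₁) :=
    (monotoneOn_primitive_of_nonneg (hf.mono hsub) fun s hs => hfnn s (hsub hs)).const_add φ₀
  have henergy : ∀ t ∈ Icc (0:ℝ) T₁, φ t + (∫ s in (0:ℝ)..t, ψ s)
      ≤ F t + ∫ s in (0:ℝ)..t, (Cstar * φ s ^ 3 + h s * φ s) := by
    intro t ht
    have hg := hintegrable (u := fun s => Cstar * φ s ^ 3 + h s * φ s)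
      ((continuousOn_const.mul (hφ.pow 3)).add ((hh.mono hsub).mul hφ)) t ht
    have hft := hintegrable (hf.mono hsub) t ht
    have := sub_add_integral_le_of_hasDerivAt ht.1 (hφ.mono (Icc_subset_Icc_right ht.2))
      (fun s hs => hderiv s (hsub ⟨hs.1.le, hs.2.le.trans ht.2⟩)) (hψint t (hsub ht))
      (hg.add hft) (fun s hs => hineq s ⟨hs.1, hs.2.le.trans (ht.2.trans hT₁le)⟩)
    rw [integral_add hg hft, hφ₀] at this
    linarith
  have hsmallF : Cstar * (∫ s in (0:ℝ)..T₁, (2 * F s) ^ 2) + ∫ s in (0:ℝ)..T₁, h s < 1 / 2 := by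
    rw [integral_congr fun s _ =>
      show (2 * F s) ^ 2 = (2*φ₀ + 2 * ∫ τ in (0:ℝ)..s, f τ)^2 by ring]
    linarith [Real.log_lt_sub_one_of_pos (by norm_num : (0:ℝ) < 3 / 2) (by norm_num)]
  exact le_two_mul_of_energy_le hCstar hφ (fun t ht => hφnn t (hsub ht))
    (fun t ht => integral_nonneg ht.1 fun s hs => hψnn s (hsub ⟨hs.1, hs.2.trans ht.2⟩))
    (hh.mono hsub) (fun t ht => hhnn t (hsub ht)) hFc hFmono (by simpa [F] using hφ₀nn)
    hsmallF henergy t₀ ht₀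

/-- Nonlinear Gronwall-type lemma (Lemma 3.2 in Lorca–Boldrini style). -/
theorem stmt_0 (T T₁ Cstar φ₀ : ℝ) (φ ψ h f φ' : ℝ → ℝ)
    (hT : 0 < T) (hT₁pos : 0 < T₁) (hT₁le : T₁ ≤ T)
    (hCstar : 0 ≤ Cstar) (hφ₀ : φ 0 = φ₀) (hφ₀nn : 0 ≤ φ₀)
    (hφnn : ∀ t ∈ Icc (0:ℝ) T, 0 ≤ φ t)
    (hψnn : ∀ t ∈ Icc (0:ℝ) T, 0 ≤ ψ t)
    (hh : ContinuousOn h (Icc 0 T)) (hhnn : ∀ t ∈ Icc (0:ℝ) T, 0 ≤ h t)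
    (hf : ContinuousOn f (Icc 0 T)) (hfnn : ∀ t ∈ Icc (0:ℝ) T, 0 ≤ f t)
    (hψint : ∀ t ∈ Icc (0:ℝ) T, IntervalIntegrable ψ MeasureTheory.volume 0 t)
    (hderiv : ∀ t ∈ Icc (0:ℝ) T, HasDerivAt φ (φ' t) t)
    (hineq : ∀ t ∈ Ioc (0:ℝ) T, φ' t + ψ t ≤ Cstar * (φ t)^3 + h t * φ t + f t)
    (hsmall : Cstar * (∫ s in (0:ℝ)..T₁, (2*φ₀ + 2 * ∫ τ in (0:ℝ)..s, f τ)^2)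
        + (∫ s in (0:ℝ)..T₁, h s) ≤ (1/2) * Real.log (3/2)) :
    ∀ t ∈ Icc (0:ℝ) T₁, φ t + (∫ s in (0:ℝ)..t, ψ s) ≤ 2 * (φ₀ + ∫ s in (0:ℝ)..t, f s) :=
  stmt_0_general T T₁ Cstar φ₀ φ ψ h f φ' hT₁le hCstar hφ₀ hφ₀nn hφnn hψnn hh hhnn hf hfnn hψint
    hderiv hineq hsmall
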